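/- For every odd integer n ≥ 3 with n ≡ 0 (mod 3), the cycle graph C_n satisfies ζ(C_n) = n(n/3 − 1) = n(n − 3)/3. -/

import Mathlib

open SimpleGraph

/-- A proper vertex colouring of `G` using exactly `χ(G)` colours. -/
def IsChromaticColoring {V : Type*} (G : SimpleGraph V) (c : V → ℕ) : Prop :=
  (∀ u v, G.Adj u v → c u ≠ c v) ∧ ((Set.range c).ncard : ℕ∞) = G.chromaticNumber

/-- The set of chromatic completion edges for a colouring `c`: unordered pairs of
distinct non-adjacent vertices with different colours. -/
def completionEdges {V : Type*} (G : SimpleGraph V) (c : V → ℕ) : Set (Sym2 V) :=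
  {e | ∃ u v, e = s(u, v) ∧ u ≠ v ∧ ¬ G.Adj u v ∧ c u ≠ c v}

/-- The chromatic completion number `ζ(G)`. -/
noncomputable def zeta {V : Type*} (G : SimpleGraph V) : ℕ :=
  sSup {m | ∃ c : V → ℕ, IsChromaticColoring G c ∧ m = (completionEdges G c).ncard}

/-!
For a proper colouring `c` of a graph with `e` edges on `N` vertices, the completion edges are the
differently coloured pairs minus the `e` edges, and twice the number of differently coloured pairs
is `N² - Σ sᵢ²`, where `sᵢ` are the sizes of the colour classes. With three colour classes
Cauchy–Schwarz gives `3 Σ sᵢ² ≥ N²`, so `c` has at most `N²/3 - e` completion edges, with equality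
when all classes have size `N/3`. On `C_n` with `n` odd and `3 ∣ n` we have `χ = 3` (an odd cycle
is not bipartite), `e = n`, and colouring `vᵢ` by `i mod 3` is proper with equal classes, so
`ζ(C_n) = n²/3 - n`.
-/

open Finset

lemma card_image_val_mod {n k : ℕ} (hk : 0 < k) (hkn : k ≤ n) :
    #(univ.image fun v : Fin n => v.val % k) = k := by
  suffices univ.image (fun v : Fin n => v.val % k) = range k by rw [this, card_range]
  ext r
  simp only [mem_image, mem_univ, true_and, mem_range]
  constructor
  · rintro ⟨v, rfl⟩
    exact Nat.mod_lt _ hk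
  · intro hr
    exact ⟨⟨r, by omega⟩, Nat.mod_eq_of_lt hr⟩

lemma card_filter_val_mod_eq {k m r : ℕ} (hr : r < k) :
    #{a : Fin (k * m) | a.val % k = r} = m := by
  have hk : 0 < k := by omega
  conv_rhs => rw [← Fintype.card_fin m, ← card_univ]
  refine card_bij' (fun a _ => ⟨a.val / k, Nat.div_lt_of_lt_mul a.2⟩)
    (fun b _ => ⟨k * b.val + r, ?_⟩) (fun _ _ => mem_univ _) ?_ ?_ ?_
  · nlinarith [b.2]
  · intro b _
    simp [Nat.mod_eq_of_lt hr]
  · intro a ha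
    ext
    simp only [mem_filter, mem_univ, true_and] at ha
    simp only
    rw [← ha, Nat.div_add_mod]
  · intro b _
    ext
    simp [Nat.mul_add_div hk, Nat.div_eq_of_lt hr]

lemma card_filter_apply_eq_apply_eq_sum_sq {V β : Type*} [Fintype V] [DecidableEq β] (c : V → β) :
    #{p : V × V | c p.1 = c p.2} = ∑ b ∈ univ.image c, #{v | c v = b} ^ 2 := by
  rw [card_eq_sum_card_fiberwise (f := fun p : V × V => c p.1) (t := univ.image c)
    (fun p _ => mem_image_of_mem _ (mem_univ _))]
  refine sum_congr rfl fun b _ => ?_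
  rw [sq, ← card_product, filter_filter]
  congr 1
  ext ⟨u, v⟩
  simp only [mem_filter, mem_univ, true_and, mem_product]
  grind

namespace SimpleGraph

variable {V : Type*} {G : SimpleGraph V} {c : V → ℕ}

lemma completionEdges_eq_sdiff :
    completionEdges G c = ((⊤ : SimpleGraph ℕ).comap c).edgeSet \ G.edgeSet := by
  ext e
  induction e using Sym2.ind with
  | _ u v =>
    simp only [completionEdges, Set.mem_ofPred_eq, Set.mem_sdiff, mem_edgeSet, comap_adj, top_adj,
      Sym2.eq_iff]
    constructor
    · rintro ⟨a, b, (⟨rfl, rfl⟩ | ⟨rfl, rfl⟩), -, hG, hc⟩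
      exacts [⟨hc, hG⟩, ⟨hc.symm, fun h => hG h.symm⟩]
    · rintro ⟨hc, hG⟩
      exact ⟨u, v, .inl ⟨rfl, rfl⟩, fun h => hc (congrArg c h), hG, hc⟩

theorem two_mul_ncard_completionEdges_add [Fintype V] [DecidableEq V] [DecidableRel G.Adj]
    (hc : ∀ u v, G.Adj u v → c u ≠ c v) :
    2 * (completionEdges G c).ncard + 2 * #G.edgeFinset +
      ∑ b ∈ univ.image c, #{v | c v = b} ^ 2 = Fintype.card V ^ 2 := by
  have hle : G ≤ (⊤ : SimpleGraph ℕ).comap c := hc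
  rw [completionEdges_eq_sdiff, Set.ncard_sdiff (edgeSet_mono hle), ← coe_edgeFinset,
    ← coe_edgeFinset, Set.ncard_coe_finset, Set.ncard_coe_finset, Nat.mul_sub,
    Nat.sub_add_cancel (by gcongr), two_mul_card_edgeFinset,
    ← card_filter_apply_eq_apply_eq_sum_sq, sq, ← Fintype.card_prod, ← card_univ]
  simp only [comap_adj, top_adj]
  rw [add_comm]
  exact card_filter_add_card_filter_not _

theorem card_image_mul_completionEdges_add_sq_le [Fintype V] [DecidableEq V] [DecidableRel G.Adj]
    (hc : ∀ u v, G.Adj u v → c u ≠ c v) :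
    #(univ.image c) * (2 * (completionEdges G c).ncard + 2 * #G.edgeFinset) +
      Fintype.card V ^ 2 ≤ #(univ.image c) * Fintype.card V ^ 2 := by
  have hcs : Fintype.card V ^ 2 ≤ #(univ.image c) * ∑ b ∈ univ.image c, #{v | c v = b} ^ 2 := by
    rw [← card_univ, card_eq_sum_card_image c univ]
    exact sq_sum_le_card_mul_sum_sq
  calc _ ≤ #(univ.image c) * (2 * (completionEdges G c).ncard + 2 * #G.edgeFinset) +
        #(univ.image c) * ∑ b ∈ univ.image c, #{v | c v = b} ^ 2 := by gcongr
    _ = _ := by rw [← mul_add, two_mul_ncard_completionEdges_add hc]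

lemma isChromaticColoring_iff [Fintype V] [DecidableEq V] :
    IsChromaticColoring G c ↔
      (∀ u v, G.Adj u v → c u ≠ c v) ∧ (#(univ.image c) : ℕ∞) = G.chromaticNumber := by
  rw [IsChromaticColoring, ← Set.ncard_coe_finset, coe_image, coe_univ, Set.image_univ]

lemma card_edgeFinset_cycleGraph {n : ℕ} (hn : 3 ≤ n) : #(cycleGraph n).edgeFinset = n := by
  obtain ⟨k, rfl⟩ : ∃ k, n = k + 3 := ⟨n - 3, by omega⟩
  have h := (cycleGraph (k + 3)).sum_degrees_eq_twice_card_edges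
  simp only [cycleGraph_degree_three_le, sum_const, card_univ, Fintype.card_fin, smul_eq_mul] at h
  omega

lemma three_le_chromaticNumber_cycleGraph {n : ℕ} (hn : 3 ≤ n) (hodd : Odd n) :
    3 ≤ (cycleGraph n).chromaticNumber := by
  obtain ⟨k, rfl⟩ : ∃ k, n = k + 3 := ⟨n - 3, by omega⟩
  exact (cycleGraph.cycle k).three_le_chromaticNumber_of_odd_loop (by simpa using hodd)

/-- Along every edge of `C_n` the index goes up by one, except on `v_{n-1} v_0`, where `k ∣ n`
still makes the residue go up by one. -/
lemma cycleGraph_adj_val_mod_ne {n k : ℕ} (hk : 2 ≤ k) (hkn : k ∣ n) {u v : Fin n}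
    (h : (cycleGraph n).Adj u v) : u.val % k ≠ v.val % k := by
  suffices ∀ u v : Fin n, (u - v).val = 1 → (v.val + 1) % k = u.val % k by
    have hsucc (a : ℕ) : (a + 1) % k ≠ a % k := fun ha => by
      have hone : 1 % k = 0 % k := Nat.ModEq.add_left_cancel' a ha
      rw [Nat.mod_eq_of_lt (by omega : 1 < k), Nat.zero_mod] at hone
      exact one_ne_zero hone
    rcases cycleGraph_adj'.mp h with h | h
    · exact fun he => hsucc _ ((this u v h).trans he)
    · exact fun he => hsucc _ ((this v u h).trans he.symm)
  intro u v h
  rcases le_or_gt v u with hvu | huv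
  · rw [Fin.coe_sub_iff_le.mpr hvu] at h
    congr 1
    omega
  · rw [Fin.coe_sub_iff_lt.mpr huv] at h
    obtain ⟨hu, hv⟩ : u.val = 0 ∧ v.val + 1 = n := by omega
    rw [hu, hv, Nat.zero_mod, Nat.mod_eq_zero_of_dvd hkn]

lemma chromaticNumber_cycleGraph_of_odd_of_three_dvd {n : ℕ} (hodd : Odd n) (h3 : 3 ∣ n) :
    (cycleGraph n).chromaticNumber = 3 := by
  refine le_antisymm ?_ (three_le_chromaticNumber_cycleGraph
    (Nat.le_of_dvd hodd.pos h3) hodd)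
  have hcol : (cycleGraph n).Colorable 3 :=
    ⟨Coloring.mk (fun v => ⟨v.val % 3, by omega⟩) fun h he =>
      cycleGraph_adj_val_mod_ne (by norm_num) h3 h (by simpa [Fin.ext_iff] using he)⟩
  exact_mod_cast hcol.chromaticNumber_le

lemma isChromaticColoring_cycleGraph_val_mod_three {n : ℕ} (hodd : Odd n) (h3 : 3 ∣ n) :
    IsChromaticColoring (cycleGraph n) (fun v => v.val % 3) := by
  rw [isChromaticColoring_iff, chromaticNumber_cycleGraph_of_odd_of_three_dvd hodd h3,
    card_image_val_mod three_pos (Nat.le_of_dvd hodd.pos h3)]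
  exact ⟨fun u v => cycleGraph_adj_val_mod_ne (by norm_num) h3, rfl⟩

lemma ncard_completionEdges_cycleGraph_le {n : ℕ} (hodd : Odd n) (h3 : 3 ∣ n)
    {c : Fin n → ℕ} (hc : IsChromaticColoring (cycleGraph n) c) :
    (completionEdges (cycleGraph n) c).ncard ≤ n * (n / 3 - 1) := by
  have hn := Nat.le_of_dvd hodd.pos h3
  obtain ⟨hproper, hk⟩ := isChromaticColoring_iff.mp hc
  rw [chromaticNumber_cycleGraph_of_odd_of_three_dvd hodd h3] at hk
  have h := card_image_mul_completionEdges_add_sq_le hproper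
  rw [(by exact_mod_cast hk : #(univ.image c) = 3), card_edgeFinset_cycleGraph hn,
    Fintype.card_fin] at h
  obtain ⟨m, rfl⟩ : ∃ m, n = 3 * (m + 1) := ⟨n / 3 - 1, by omega⟩
  rw [show 3 * (m + 1) / 3 - 1 = m by omega]
  nlinarith

lemma ncard_completionEdges_cycleGraph_val_mod_three {n : ℕ} (hn : 3 ≤ n) (h3 : 3 ∣ n) :
    (completionEdges (cycleGraph n) (fun v => v.val % 3)).ncard = n * (n / 3 - 1) := by
  have h := two_mul_ncard_completionEdges_add (G := cycleGraph n) (c := fun v => v.val % 3)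
    fun _ _ => cycleGraph_adj_val_mod_ne (by norm_num) h3
  rw [card_edgeFinset_cycleGraph hn, Fintype.card_fin] at h
  obtain ⟨m, rfl⟩ := h3
  have hfib : ∀ b ∈ univ.image (fun v : Fin (3 * m) => v.val % 3),
      #{v : Fin (3 * m) | v.val % 3 = b} ^ 2 = m ^ 2 := by
    intro b hb
    obtain ⟨v, -, rfl⟩ := mem_image.mp hb
    rw [card_filter_val_mod_eq (Nat.mod_lt _ three_pos)]
  rw [sum_congr rfl hfib, sum_const, card_image_val_mod three_pos hn] at h
  obtain ⟨m, rfl⟩ : ∃ m', m = m' + 1 := ⟨m - 1, by omega⟩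
  rw [Nat.mul_div_cancel_left _ three_pos, Nat.add_sub_cancel]
  simp only [smul_eq_mul] at h
  nlinarith

end SimpleGraph

theorem zeta_cycle_odd_zero_mod_three_general (n : ℕ) (hodd : Odd n)
    (hmod : n % 3 = 0) :
    zeta (cycleGraph n) = n * (n / 3 - 1) ∧ zeta (cycleGraph n) = n * (n - 3) / 3 := by
  have h3 : 3 ∣ n := Nat.dvd_of_mod_eq_zero hmod
  have hzeta : zeta (cycleGraph n) = n * (n / 3 - 1) := by
    refine IsGreatest.csSup_eq ⟨⟨_, isChromaticColoring_cycleGraph_val_mod_three hodd h3, ?_⟩, ?_⟩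
    · exact (ncard_completionEdges_cycleGraph_val_mod_three (Nat.le_of_dvd hodd.pos h3) h3).symm
    · rintro _ ⟨c, hc, rfl⟩
      exact ncard_completionEdges_cycleGraph_le hodd h3 hc
  refine ⟨hzeta, hzeta.trans ?_⟩
  obtain ⟨m, rfl⟩ := h3
  rw [Nat.mul_div_cancel_left m three_pos, ← Nat.mul_sub_one, mul_left_comm,
    Nat.mul_div_cancel_left _ three_pos]

/-- For odd `n ≥ 3` with `n ≡ 0 (mod 3)`, `ζ(C_n) = n(n/3 - 1) = n(n-3)/3`. -/
theorem zeta_cycle_odd_zero_mod_three (n : ℕ) (hn : 3 ≤ n) (hodd : Odd n)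
    (hmod : n % 3 = 0) :
    zeta (cycleGraph n) = n * (n / 3 - 1) ∧ zeta (cycleGraph n) = n * (n - 3) / 3 :=
  zeta_cycle_odd_zero_mod_three_general n hodd hmod
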